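/- Let w = w(n) be a function with w(n) → ∞ as n → ∞, let p = p(n) satisfy (ln n + ln ln n + w(n))/n ≤ p(n) ≤ 10·ln n / n, and let C be a fixed positive integer. Then whp the random graph G ~ G(n,p(n)) satisfies: between any two vertices u, v ∈ [n] there are at most 3 trails of length at most C. -/

import Mathlib

open MeasureTheory Filter

/-- The Bernoulli measure on `Bool` with success probability `p`. -/
noncomputable def bernoulliBool (p : ℝ) : Measure Bool :=
  (ENNReal.ofReal p) • Measure.dirac true + (ENNReal.ofReal (1 - p)) • Measure.dirac false

/-- The binomial random graph measure `G(n,p)`: each potential edge (pair of distinct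
vertices of `Fin n`) is present independently with probability `p`. An outcome is an
indicator function on unordered pairs. -/
noncomputable def gnp (n : ℕ) (p : ℝ) : Measure (Sym2 (Fin n) → Bool) :=
  Measure.pi fun _ => bernoulliBool p

/-- The simple graph on `[n]` determined by an outcome `ω` of `G(n,p)`. -/
def graphOf {n : ℕ} (ω : Sym2 (Fin n) → Bool) : SimpleGraph (Fin n) where
  Adj v w := v ≠ w ∧ ω s(v, w) = true
  symm := by
    constructor
    intro v w h
    exact ⟨h.1.symm, by rw [Sym2.eq_swap]; exact h.2⟩
  loopless := by
    constructor
    intro v h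
    exact h.1 rfl

instance graphOfDecidableAdj {n : ℕ} (ω : Sym2 (Fin n) → Bool) :
    DecidableRel (graphOf ω).Adj :=
  fun v w => inferInstanceAs (Decidable (v ≠ w ∧ ω s(v, w) = true))

/-!
Call a graph sparse if none of its subgraphs has more edges than non-isolated vertices
(every component has at most one cycle). In a sparse graph there are at most three trails
between two vertices: deleting leaves other than the endpoints loses no trail, a leaf endpoint
forces the first edge, and once no leaf is left the handshake lemma bounds all degrees by two, so
a trail is determined by its first edge. Four trails of length at most `C` span at most `4C`
edges, so if they exist `G(n, p)` contains `s < 4C` vertices spanning `s + 1` edges. The expected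
number of these is `O(n^s p^(s+1)) = O((np)^(s+1) / n) = O(log^(s+1) n / n) → 0`.
-/

open Finset SimpleGraph Real Topology
open scoped ENNReal

theorem Set.ncard_le_ncard_of_subset_image {α β : Type*} {s : Set α} {t : Set β} {f : β → α}
    (h : s ⊆ f '' t) (ht : t.Finite) : s.ncard ≤ t.ncard :=
  (Set.ncard_le_ncard h (ht.image f)).trans (Set.ncard_image_le ht)

namespace SimpleGraph

variable {V : Type*} {G : SimpleGraph V}

namespace Walk

protected theorem IsTrail.transfer {H : SimpleGraph V} {u v : V} {q : G.Walk u v} (hq : q.IsTrail)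
    (hqH : ∀ e ∈ q.edges, e ∈ H.edgeSet) : (q.transfer H hqH).IsTrail := by
  rw [isTrail_def, edges_transfer]
  exact hq.edges_nodup

theorem IsTrail.countP_mem_edges_le [Finite V] [DecidableEq V] {u v : V} {q : G.Walk u v}
    (hq : q.IsTrail) (x : V) : q.edges.countP (x ∈ ·) ≤ (G.neighborSet x).ncard := by
  rw [List.countP_eq_length_filter, ← List.toFinset_card_of_nodup (hq.edges_nodup.filter _),
    ← Set.ncard_coe_finset, ← Nat.card_coe_set_eq (G.neighborSet x),
    ← Nat.card_congr (G.incidenceSetEquivNeighborSet x), Nat.card_coe_set_eq]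
  refine Set.ncard_le_ncard fun e he => ?_
  simp only [List.coe_toFinset, List.mem_filter, decide_eq_true_eq, Set.mem_ofPred_eq] at he
  exact ⟨q.edges_subset_edgeSet he.1, he.2⟩

/-- A trail meets each vertex other than its endpoints in an even number of edges. -/
theorem IsTrail.notMem_of_mem_edges [Finite V] [DecidableEq V] {u v x : V} {q : G.Walk u v}
    (hq : q.IsTrail) (hx : (G.neighborSet x).ncard ≤ 1) (hxuv : u ≠ v → x ≠ u ∧ x ≠ v)
    {e : Sym2 V} (he : e ∈ q.edges) : x ∉ e := by
  obtain ⟨k, hk⟩ := (hq.even_countP_edges_iff x).2 hxuv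
  have hzero : q.edges.countP (x ∈ ·) = 0 := by
    have := hq.countP_mem_edges_le x
    omega
  simpa using List.countP_eq_zero.1 hzero e he

theorem IsTrail.two_le_countP_mem_edges [DecidableEq V] {u : V} {c : G.Walk u u}
    (hc : c.IsTrail) (hnil : ¬c.Nil) : 2 ≤ c.edges.countP (u ∈ ·) := by
  obtain ⟨k, hk⟩ := (hc.even_countP_edges_iff u).2 (absurd rfl)
  have hpos : 0 < c.edges.countP (u ∈ ·) := by
    cases c with
    | nil => exact absurd Walk.Nil.nil hnil
    | cons h c => exact List.countP_pos_iff.2 ⟨_, List.mem_cons_self, by simp⟩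
  omega

theorem IsTrail.nil_of_notMem_edges [Finite V] [DecidableEq V] {u b : V} (hub : G.Adj u b)
    (hb : (G.neighborSet b).ncard ≤ 2) {t : G.Walk b b} (ht : t.IsTrail)
    (hut : s(u, b) ∉ t.edges) : t.Nil := by
  by_contra hnil
  have h3 := ((isTrail_cons hub t).2 ⟨ht, hut⟩).countP_mem_edges_le b
  have h2 := ht.two_le_countP_mem_edges hnil
  simp only [edges_cons, List.countP_cons, Sym2.mem_mk_right, decide_true, ↓reduceIte] at h3
  omega

theorem IsTrail.eq_of_head?_edges_eq [Finite V] [DecidableEq V]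
    (hdeg : ∀ x, (G.neighborSet x).ncard ≤ 2) {u v : V} {q r : G.Walk u v}
    (hq : q.IsTrail) (hr : r.IsTrail) (h : q.edges.head? = r.edges.head?) : q = r := by
  induction q with
  | nil => exact (eq_nil_iff_nil.2 (edges_eq_nil.1 (List.head?_eq_none_iff.1 h.symm))).symm
  | @cons u b v hub q ih =>
    cases r with
    | nil => simp at h
    | @cons _ c _ huc r =>
      obtain rfl : b = c := Sym2.congr_right.1 (by simpa using h)
      rw [isTrail_cons] at hq hr
      -- at `b` both trails arrive along `s(u, b)`, so they leave along the only other edge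
      have hhead : q.edges.head? = r.edges.head? := by
        cases q with
        | nil => rw [eq_nil_iff_nil.2 (hr.1.nil_of_notMem_edges hub (hdeg b) hr.2)]
        | @cons _ x _ hbx q =>
          cases r with
          | nil => exact absurd (hq.1.nil_of_notMem_edges hub (hdeg b) hq.2) not_nil_cons
          | @cons _ y _ hby r =>
            have hxu : x ≠ u := by rintro rfl; exact hq.2 (by simp [Sym2.eq_swap])
            have hyu : y ≠ u := by rintro rfl; exact hr.2 (by simp [Sym2.eq_swap])
            by_contra hxy
            have := (Set.two_lt_ncard_iff (s := G.neighborSet b) (Set.toFinite _)).2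
              ⟨u, x, y, hub.symm, hbx, hby, hxu.symm, hyu.symm, fun h' => hxy (by simp [h'])⟩
            linarith [hdeg b]
      rw [ih hq.1 hr.1 hhead]

end Walk

def trails (G : SimpleGraph V) (u v : V) : Set (G.Walk u v) := {q | q.IsTrail}

@[simp]
theorem mem_trails {u v : V} {q : G.Walk u v} : q ∈ G.trails u v ↔ q.IsTrail := Iff.rfl

theorem finite_trails [Finite V] (u v : V) : (G.trails u v).Finite := by
  have := Fintype.ofFinite (Sym2 V)
  have hnodup : {l : List (Sym2 V) | l.Nodup}.Finite :=
    Set.finite_coe_iff.1 (inferInstance : Finite {l : List (Sym2 V) // l.Nodup})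
  exact (hnodup.preimage Walk.edges_injective.injOn).subset
    fun q hq => hq.edges_nodup

theorem ncard_trails_le_three_of_ncard_neighborSet_le_two [Finite V] [DecidableEq V]
    (hdeg : ∀ x, (G.neighborSet x).ncard ≤ 2) (u v : V) : (G.trails u v).ncard ≤ 3 := by
  have hmaps : ∀ q ∈ G.trails u v,
      q.edges.head? ∈ insert none ((fun w => some s(u, w)) '' G.neighborSet u) := by
    rintro (_ | ⟨h, q⟩) -
    · exact Set.mem_insert _ _
    · exact Set.mem_insert_of_mem _ ⟨_, h, rfl⟩
  calc (G.trails u v).ncard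
      ≤ (insert none ((fun w => some s(u, w)) '' G.neighborSet u)).ncard :=
        Set.ncard_le_ncard_of_injOn _ hmaps
          (fun q hq r hr h => Walk.IsTrail.eq_of_head?_edges_eq hdeg hq hr h) (Set.toFinite _)
    _ ≤ ((fun w => some s(u, w)) '' G.neighborSet u).ncard + 1 := Set.ncard_insert_le _ _
    _ ≤ (G.neighborSet u).ncard + 1 := by grw [Set.ncard_image_le (Set.toFinite _)]
    _ ≤ 3 := by linarith [hdeg u]

/-- Handshake: degrees at least `2` on the support can only sum to `2 * #E ≤ 2 * #support`
if they all equal `2`. -/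
theorem ncard_neighborSet_le_two [Fintype V] (hE : G.edgeSet.ncard ≤ G.support.ncard)
    (hleaf : ∀ x, (G.neighborSet x).ncard ≠ 1) (x : V) : (G.neighborSet x).ncard ≤ 2 := by
  classical
  have hdeg : ∀ y, (G.neighborSet y).ncard = G.degree y := fun y => by
    rw [← card_neighborSet_eq_degree, Set.ncard_eq_toFinset_card', Set.toFinset_card]
  have hsupp : ∀ y ∈ G.support.toFinset, 2 ≤ G.degree y := fun y hy => by
    have h1 := hleaf y
    have h0 := (G.degree_pos_iff_mem_support y).2 (Set.mem_toFinset.1 hy)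
    rw [hdeg] at h1
    omega
  by_contra! hx
  rw [hdeg] at hx
  have hxs : x ∈ G.support.toFinset :=
    Set.mem_toFinset.2 ((G.degree_pos_iff_mem_support x).1 (by omega))
  have hlt := Finset.sum_lt_sum hsupp ⟨x, hxs, hx⟩
  rw [G.sum_degrees_support_eq_twice_card_edges, Finset.sum_const, smul_eq_mul,
    ← Set.ncard_eq_toFinset_card', ← Set.ncard_coe_finset, coe_edgeFinset] at hlt
  omega

theorem ncard_trails_le_of_le [Finite V] {H : SimpleGraph V} (hle : H ≤ G) {u v : V}
    {S : Set (G.Walk u v)} (hS : ∀ q ∈ S, q.IsTrail ∧ ∀ e ∈ q.edges, e ∈ H.edgeSet) :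
    S.ncard ≤ (H.trails u v).ncard := by
  refine Set.ncard_le_ncard_of_subset_image (f := Walk.mapLe hle) (fun q hq => ?_)
    (finite_trails u v)
  obtain ⟨hq, hqH⟩ := hS q hq
  exact ⟨q.transfer H hqH, hq.transfer hqH, Walk.edges_injective (by simp)⟩

theorem ncard_trails_le_deleteEdges_of_neighborSet_eq [Finite V] [DecidableEq V] {u v x y : V}
    (hxy : G.neighborSet x = {y}) (hxuv : u ≠ v → x ≠ u ∧ x ≠ v) :
    (G.trails u v).ncard ≤ ((G.deleteEdges {s(x, y)}).trails u v).ncard :=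
  ncard_trails_le_of_le (deleteEdges_le _) fun q hq => ⟨hq, fun e he => by
    rw [edgeSet_deleteEdges]
    refine ⟨q.edges_subset_edgeSet he, ?_⟩
    rintro rfl
    exact hq.notMem_of_mem_edges (by simp [hxy]) hxuv he (Sym2.mem_mk_left x y)⟩

theorem ncard_trails_le_deleteEdges_of_neighborSet_eq_start [Finite V] {u v y : V}
    (hu : G.neighborSet u = {y}) (huv : u ≠ v) :
    (G.trails u v).ncard ≤ ((G.deleteEdges {s(u, y)}).trails y v).ncard := by
  have huy : G.Adj u y := by rw [← mem_neighborSet, hu]; rfl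
  refine Set.ncard_le_ncard_of_subset_image
    (f := fun q => Walk.cons huy (q.mapLe (deleteEdges_le _))) ?_ (finite_trails _ _)
  intro q hq
  cases q with
  | nil => exact absurd rfl huv
  | @cons _ w _ huw q =>
    obtain rfl : w = y := by rw [← Set.mem_singleton_iff, ← hu]; exact huw
    rw [mem_trails, Walk.isTrail_cons] at hq
    have hqH : ∀ e ∈ q.edges, e ∈ (G.deleteEdges {s(u, w)}).edgeSet := fun e he => by
      rw [edgeSet_deleteEdges]
      exact ⟨q.edges_subset_edgeSet he, by rintro rfl; exact hq.2 he⟩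
    exact ⟨q.transfer _ hqH, hq.1.transfer hqH, Walk.edges_injective (by simp)⟩

theorem ncard_trails_le_ncard_trails_swap [Finite V] (u v : V) :
    (G.trails u v).ncard ≤ (G.trails v u).ncard :=
  Set.ncard_le_ncard_of_subset_image (f := Walk.reverse)
    (fun q hq => ⟨q.reverse, hq.reverse, q.reverse_reverse⟩) (finite_trails v u)

def IsSparse (G : SimpleGraph V) : Prop :=
  ∀ H ≤ G, H.edgeSet.ncard ≤ H.support.ncard

def IsLocallySparse (G : SimpleGraph V) (k : ℕ) : Prop :=
  ∀ H ≤ G, H.edgeSet.ncard ≤ k → H.edgeSet.ncard ≤ H.support.ncard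

theorem IsSparse.mono {H : SimpleGraph V} (hG : G.IsSparse) (hle : H ≤ G) : H.IsSparse :=
  fun H' hH' => hG H' (hH'.trans hle)

theorem IsLocallySparse.isSparse [Finite V] {k : ℕ} (hG : G.IsLocallySparse k)
    {H : SimpleGraph V} (hle : H ≤ G) (hk : H.edgeSet.ncard ≤ k) : H.IsSparse :=
  fun H' hH' => hG H' (hH'.trans hle) ((Set.ncard_le_ncard (edgeSet_mono hH')).trans hk)

theorem IsSparse.ncard_trails_le_three [Fintype V] [DecidableEq V] (hG : G.IsSparse)
    (u v : V) : (G.trails u v).ncard ≤ 3 := by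
  induction hE : G.edgeSet.ncard using Nat.strong_induction_on generalizing G u v with
  | _ m ih =>
  by_cases hleaf : ∃ x y, G.neighborSet x = {y}
  · obtain ⟨x, y, hxy⟩ := hleaf
    have hadj : G.Adj x y := by rw [← mem_neighborSet, hxy]; rfl
    have hlt : (G.deleteEdges {s(x, y)}).edgeSet.ncard < m := by
      rw [edgeSet_deleteEdges, ← hE]
      exact Set.ncard_sdiff_singleton_lt_of_mem hadj
    have ih' : ∀ a b, ((G.deleteEdges {s(x, y)}).trails a b).ncard ≤ 3 := fun a b =>
      ih _ hlt (hG.mono (deleteEdges_le _)) a b rfl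
    by_cases hxuv : u ≠ v → x ≠ u ∧ x ≠ v
    · exact (ncard_trails_le_deleteEdges_of_neighborSet_eq hxy hxuv).trans (ih' u v)
    · push Not at hxuv
      obtain ⟨huv, hxv⟩ := hxuv
      by_cases hxu : x = u
      · subst hxu
        exact (ncard_trails_le_deleteEdges_of_neighborSet_eq_start hxy huv).trans (ih' y v)
      · obtain rfl := hxv hxu
        exact (ncard_trails_le_ncard_trails_swap u x).trans
          ((ncard_trails_le_deleteEdges_of_neighborSet_eq_start hxy hxu).trans (ih' y u))
  · push Not at hleaf
    refine ncard_trails_le_three_of_ncard_neighborSet_le_two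
      (ncard_neighborSet_le_two (hG G le_rfl) fun x h => ?_) u v
    obtain ⟨y, hy⟩ := Set.ncard_eq_one.1 h
    exact hleaf x y hy

theorem IsLocallySparse.ncard_trails_length_le_le_three [Fintype V] [DecidableEq V] {C : ℕ}
    (hG : G.IsLocallySparse (4 * C)) (u v : V) :
    {q : G.Walk u v | q.IsTrail ∧ q.length ≤ C}.ncard ≤ 3 := by
  set S := {q : G.Walk u v | q.IsTrail ∧ q.length ≤ C}
  have hS : S.Finite := (finite_trails u v).subset fun q hq => hq.1
  by_contra! h3
  obtain ⟨t, hts, ht⟩ := Finset.exists_subset_card_eq (s := hS.toFinset) (n := 4)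
    (by rw [← Set.ncard_eq_toFinset_card _ hS]; omega)
  have htS : ∀ q ∈ t, q ∈ S := fun q hq => hS.mem_toFinset.1 (hts hq)
  set F := t.biUnion fun q => q.edges.toFinset
  set H := G.deleteEdges (↑F)ᶜ
  have hF : F.card ≤ 4 * C := by
    refine Finset.card_biUnion_le.trans ?_
    calc ∑ q ∈ t, q.edges.toFinset.card ≤ ∑ _q ∈ t, C :=
          Finset.sum_le_sum fun q hq => (List.toFinset_card_le _).trans
            ((q.length_edges).symm ▸ (htS q hq).2)
      _ = 4 * C := by rw [Finset.sum_const, ht, smul_eq_mul]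
  have hH : H.IsSparse := hG.isSparse (deleteEdges_le _) <| by
    refine le_trans (Set.ncard_le_ncard ?_ F.finite_toSet) (by rwa [Set.ncard_coe_finset])
    rw [edgeSet_deleteEdges, Set.sdiff_compl]
    exact Set.inter_subset_right
  have h4 : (t : Set (G.Walk u v)).ncard ≤ (H.trails u v).ncard :=
    ncard_trails_le_of_le (deleteEdges_le _) fun q hq => ⟨(htS q hq).1, fun e he => by
      rw [edgeSet_deleteEdges, Set.sdiff_compl]
      exact ⟨q.edges_subset_edgeSet he, mem_biUnion.2 ⟨q, hq, List.mem_toFinset.2 he⟩⟩⟩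
  have := hH.ncard_trails_le_three u v
  rw [Set.ncard_coe_finset, ht] at h4
  omega

def denseEdgeSets (V : Type*) [Fintype V] [DecidableEq V] (s : ℕ) : Finset (Finset (Sym2 V)) :=
  (powersetCard s univ).biUnion fun S => S.sym2.powersetCard (s + 1)

theorem card_of_mem_denseEdgeSets [Fintype V] [DecidableEq V] {s : ℕ} {F : Finset (Sym2 V)}
    (hF : F ∈ denseEdgeSets V s) : #F = s + 1 := by
  obtain ⟨_, -, hF⟩ := Finset.mem_biUnion.1 hF
  exact (Finset.mem_powersetCard.1 hF).2

theorem card_denseEdgeSets_le [Fintype V] [DecidableEq V] (s : ℕ) :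
    #(denseEdgeSets V s) ≤ (Fintype.card V).choose s * ((s + 1).choose 2).choose (s + 1) := by
  rw [← Finset.card_univ, ← Finset.card_powersetCard]
  refine Finset.card_biUnion_le_card_mul _ _ _ fun S hS => ?_
  rw [Finset.card_powersetCard, Finset.card_sym2, (Finset.mem_powersetCard.1 hS).2]

theorem exists_mem_denseEdgeSets_of_not_isLocallySparse [Fintype V] [DecidableEq V] {k : ℕ}
    (hG : ¬G.IsLocallySparse k) : ∃ s < k, ∃ F ∈ denseEdgeSets V s, ↑F ⊆ G.edgeSet := by
  classical
  simp only [IsLocallySparse, not_forall, not_le] at hG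
  obtain ⟨H, hHG, hk, hlt⟩ := hG
  have hfin := H.edgeSet.toFinite
  set S := H.support.toFinset
  have hS : S.card = H.support.ncard := (Set.ncard_eq_toFinset_card' _).symm
  obtain ⟨F, hF, hcard⟩ := Finset.exists_subset_card_eq (s := hfin.toFinset) (n := S.card + 1)
    (by rw [← Set.ncard_eq_toFinset_card _ hfin]; omega)
  have hFH : ∀ e ∈ F, e ∈ H.edgeSet := fun e he => hfin.mem_toFinset.1 (hF he)
  refine ⟨S.card, by omega, F, Finset.mem_biUnion.2 ⟨S, by simp, ?_⟩,
    fun e he => edgeSet_mono hHG (hFH e he)⟩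
  refine Finset.mem_powersetCard.2 ⟨fun e he => Finset.mem_sym2_iff.2 fun a ha => ?_, hcard⟩
  induction e using Sym2.ind with
  | _ x y =>
    have hxy := hFH _ he
    rcases Sym2.mem_iff.1 ha with rfl | rfl
    · exact Set.mem_toFinset.2 ⟨_, hxy⟩
    · exact Set.mem_toFinset.2 ⟨_, hxy.symm⟩

end SimpleGraph

theorem isProbabilityMeasure_bernoulliBool {p : ℝ} (h0 : 0 ≤ p) (h1 : p ≤ 1) :
    IsProbabilityMeasure (bernoulliBool p) :=
  ⟨by simp [bernoulliBool, ← ENNReal.ofReal_add h0 (sub_nonneg.2 h1)]⟩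

theorem isProbabilityMeasure_gnp (n : ℕ) {p : ℝ} (h0 : 0 ≤ p) (h1 : p ≤ 1) :
    IsProbabilityMeasure (gnp n p) :=
  have := isProbabilityMeasure_bernoulliBool h0 h1
  Measure.pi.instIsProbabilityMeasure _

theorem gnp_setOf_forall_mem_eq_true {n : ℕ} {p : ℝ} (h0 : 0 ≤ p) (h1 : p ≤ 1)
    (F : Finset (Sym2 (Fin n))) :
    gnp n p {ω | ∀ e ∈ F, ω e = true} = ENNReal.ofReal p ^ #F := by
  have := isProbabilityMeasure_bernoulliBool h0 h1
  have hpi : {ω : Sym2 (Fin n) → Bool | ∀ e ∈ F, ω e = true} =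
      (F : Set (Sym2 (Fin n))).pi fun _ => {true} := by
    ext ω
    simp [Set.mem_pi]
  rw [hpi, gnp, Measure.pi_pi_finset]
  simp [bernoulliBool]

theorem edgeSet_graphOf_subset {n : ℕ} (ω : Sym2 (Fin n) → Bool) :
    (graphOf ω).edgeSet ⊆ {e | ω e = true} := by
  intro e he
  induction e using Sym2.ind with
  | _ a b => exact he.2

theorem gnp_not_isLocallySparse_le (n k : ℕ) {p : ℝ} (h0 : 0 ≤ p) (h1 : p ≤ 1) :
    gnp n p {ω | ¬(graphOf ω).IsLocallySparse k} ≤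
      ∑ s ∈ range k, #(denseEdgeSets (Fin n) s) * ENNReal.ofReal p ^ (s + 1) := by
  calc gnp n p {ω | ¬(graphOf ω).IsLocallySparse k}
      ≤ gnp n p (⋃ s ∈ range k, ⋃ F ∈ denseEdgeSets (Fin n) s,
          {ω | ∀ e ∈ F, ω e = true}) := by
        refine measure_mono fun ω hω => ?_
        obtain ⟨s, hs, F, hF, hFG⟩ := exists_mem_denseEdgeSets_of_not_isLocallySparse hω
        simp only [Set.mem_iUnion]
        exact ⟨s, mem_range.2 hs, F, hF, fun e he => edgeSet_graphOf_subset ω (hFG he)⟩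
    _ ≤ ∑ s ∈ range k, ∑ F ∈ denseEdgeSets (Fin n) s,
          gnp n p {ω | ∀ e ∈ F, ω e = true} :=
        (measure_biUnion_finset_le _ _).trans
          (sum_le_sum fun s _ => measure_biUnion_finset_le _ _)
    _ = _ := sum_congr rfl fun s _ => by
        rw [sum_congr rfl fun F hF => by
          rw [gnp_setOf_forall_mem_eq_true h0 h1, card_of_mem_denseEdgeSets hF],
          sum_const, nsmul_eq_mul]

theorem choose_mul_pow_succ_le_pow_succ_div {n s : ℕ} {p L : ℝ} (hn : 0 < n) (hp : 0 ≤ p)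
    (hL : n * p ≤ L) :
    (n.choose s : ℝ) * p ^ (s + 1) ≤ L ^ (s + 1) / n := by
  have hn' : (0 : ℝ) < n := by exact_mod_cast hn
  rw [le_div_iff₀ hn']
  calc (n.choose s : ℝ) * p ^ (s + 1) * n ≤ (n : ℝ) ^ s * p ^ (s + 1) * n := by
        gcongr
        exact_mod_cast Nat.choose_le_pow n s
    _ = (n * p) ^ (s + 1) := by ring
    _ ≤ L ^ (s + 1) := by gcongr

theorem tendsto_pow_log_div_natCast (j : ℕ) :
    Tendsto (fun n : ℕ => log n ^ j / n) atTop (𝓝 0) := by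
  simpa [Function.comp_def] using (Real.tendsto_pow_log_div_mul_add_atTop 1 0 j one_ne_zero).comp
    tendsto_natCast_atTop_atTop

theorem eventually_le_one_of_le_mul_log_div {c : ℝ} {p : ℕ → ℝ}
    (hp : ∀ n, p n ≤ c * log n / n) : ∀ᶠ n in atTop, p n ≤ 1 := by
  have h := (tendsto_pow_log_div_natCast 1).const_mul c
  simp only [pow_one, mul_zero] at h
  filter_upwards [h.eventually_le_const zero_lt_one] with n hn
  exact (hp n).trans (by rwa [mul_div_assoc])

theorem tendsto_gnp_not_isLocallySparse (k : ℕ) {c : ℝ} {p : ℕ → ℝ}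
    (hp0 : ∀ᶠ n in atTop, 0 ≤ p n) (hp : ∀ n, p n ≤ c * log n / n) :
    Tendsto (fun n => gnp n (p n) {ω | ¬(graphOf ω).IsLocallySparse k}) atTop (𝓝 0) := by
  set b : ℕ → ℝ := fun s => (((s + 1).choose 2).choose (s + 1) : ℕ)
  have hterm : ∀ s, Tendsto (fun n : ℕ => b s * ((c * log n) ^ (s + 1) / n)) atTop (𝓝 0) :=
    fun s => by
      simpa [mul_pow, mul_div_assoc, mul_assoc] using
        (tendsto_pow_log_div_natCast (s + 1)).const_mul (b s * c ^ (s + 1))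
  refine tendsto_of_tendsto_of_tendsto_of_le_of_le' tendsto_const_nhds
    (h := fun n : ℕ => ∑ s ∈ range k, ENNReal.ofReal (b s * ((c * log n) ^ (s + 1) / n)))
    ?_ (Eventually.of_forall fun _ => bot_le) ?_
  · simpa using tendsto_finsetSum _ fun s _ => ENNReal.tendsto_ofReal (hterm s)
  filter_upwards [hp0, eventually_le_one_of_le_mul_log_div hp, eventually_gt_atTop 0]
    with n h0 h1 hn
  refine (gnp_not_isLocallySparse_le n k h0 h1).trans (sum_le_sum fun s _ => ?_)
  rw [← ENNReal.ofReal_natCast, ← ENNReal.ofReal_pow h0,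
    ← ENNReal.ofReal_mul (Nat.cast_nonneg _)]
  refine ENNReal.ofReal_le_ofReal ?_
  have hcard := card_denseEdgeSets_le (V := Fin n) s
  rw [Fintype.card_fin] at hcard
  calc (#(denseEdgeSets (Fin n) s) : ℝ) * p n ^ (s + 1)
      ≤ b s * (n.choose s * p n ^ (s + 1)) := by
        rw [← mul_assoc, mul_comm (b s)]
        gcongr
        simp only [b]
        exact_mod_cast hcard
    _ ≤ b s * ((c * log n) ^ (s + 1) / n) := by
        gcongr
        refine choose_mul_pow_succ_le_pow_succ_div hn h0 ?_
        have := hp n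
        rwa [le_div_iff₀ (by exact_mod_cast hn), mul_comm] at this

theorem statement6_general (w : ℕ → ℝ) (hw : Tendsto w atTop atTop) (p : ℕ → ℝ)
    (hp : ∀ n : ℕ,
      (Real.log n + Real.log (Real.log n) + w n) / (n : ℝ) ≤ p n ∧
        p n ≤ 10 * Real.log n / (n : ℝ))
    (C : ℕ) :
    Tendsto (fun n : ℕ => gnp n (p n)
      {ω | ∀ u v : Fin n, u ≠ v →
        Set.ncard {q : (graphOf ω).Walk u v | q.IsTrail ∧ q.length ≤ C} ≤ 3})
      atTop (nhds 1) := by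
  have hp0 : ∀ᶠ n in atTop, 0 ≤ p n := by
    filter_upwards [hw.eventually_ge_atTop 0, eventually_ge_atTop 3] with n hwn hn
    have hlog : 1 ≤ log n := by
      rw [Real.le_log_iff_exp_le (by positivity)]
      calc exp 1 ≤ 3 := (Real.exp_one_lt_d9.trans_le (by norm_num)).le
        _ ≤ n := by exact_mod_cast hn
    exact (div_nonneg (by linarith [Real.log_nonneg hlog]) (Nat.cast_nonneg n)).trans (hp n).1
  have hp1 := eventually_le_one_of_le_mul_log_div fun n => (hp n).2
  have hbad := tendsto_gnp_not_isLocallySparse (4 * C) hp0 fun n => (hp n).2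
  refine tendsto_of_tendsto_of_tendsto_of_le_of_le'
    (by simpa using ENNReal.Tendsto.sub tendsto_const_nhds hbad (Or.inl ENNReal.one_ne_top))
    tendsto_const_nhds ?_ ?_
  · filter_upwards [hp0, hp1] with n h0 h1
    have := isProbabilityMeasure_gnp n h0 h1
    rw [tsub_le_iff_right, ← measure_univ (μ := gnp n (p n))]
    refine (measure_univ_le_add_compl _).trans (add_le_add le_rfl (measure_mono ?_))
    exact fun ω hω hsparse => hω fun u v _ => hsparse.ncard_trails_length_le_le_three u v
  · filter_upwards [hp0, hp1] with n h0 h1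
    have := isProbabilityMeasure_gnp n h0 h1
    exact prob_le_one

theorem statement6 (w : ℕ → ℝ) (hw : Tendsto w atTop atTop) (p : ℕ → ℝ)
    (hp : ∀ n : ℕ,
      (Real.log n + Real.log (Real.log n) + w n) / (n : ℝ) ≤ p n ∧
        p n ≤ 10 * Real.log n / (n : ℝ))
    (C : ℕ) (hC : 0 < C) :
    Tendsto (fun n : ℕ => gnp n (p n)
      {ω | ∀ u v : Fin n, u ≠ v →
        Set.ncard {q : (graphOf ω).Walk u v | q.IsTrail ∧ q.length ≤ C} ≤ 3})
      atTop (nhds 1) :=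
  statement6_general w hw p hp C
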